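/- Let k be any field and let A ∈ M_n(k). If every X ∈ M_n(k) satisfying Xᵀ A X = A is invertible (i.e. the monoid Sol_A is a group), then for every vector v ∈ k^n with A v = 0 and Aᵀ v = 0, the rank-one matrix v vᵀ (with entries v_i v_j) is nilpotent. -/

import Mathlib

open Matrix

/-! If `v` is anisotropic (`v ⬝ᵥ v ≠ 0`) and `w := -(v ⬝ᵥ v)⁻¹ • v`, then `X := 1 + vecMulVec v w`
kills `v`, so it is singular; but `A * vecMulVec v w = 0` and `(vecMulVec v w)ᵀ * A = 0` because
`v` lies in the kernels of `A` and `Aᵀ`, hence `Xᵀ * A * X = A`. So when `Sol_A` is a group, `v` is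
isotropic, and then `(vecMulVec v v) ^ 2 = (v ⬝ᵥ v) • vecMulVec v v = 0`. -/

section

variable {n R : Type*} [Fintype n]

theorem vecMulVec_self_mul_self [CommSemiring R] (v : n → R) :
    vecMulVec v v * vecMulVec v v = (v ⬝ᵥ v) • vecMulVec v v := by
  rw [vecMulVec_mul_vecMulVec, vecMulVec_smul]

theorem isNilpotent_vecMulVec_self [DecidableEq n] [CommSemiring R] {v : n → R} (h : v ⬝ᵥ v = 0) :
    IsNilpotent (vecMulVec v v) :=
  ⟨2, by rw [sq, vecMulVec_self_mul_self, h, zero_smul]⟩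

theorem transpose_one_add_mul_mul_one_add [DecidableEq n] [Semiring R] {A N : Matrix n n R}
    (hAN : A * N = 0) (hNA : Nᵀ * A = 0) : (1 + N)ᵀ * A * (1 + N) = A := by
  rw [transpose_add, transpose_one, add_mul, one_mul, hNA, add_zero, mul_add, mul_one, hAN,
    add_zero]

theorem transpose_one_add_vecMulVec_mul_mul [DecidableEq n] [CommSemiring R] {A : Matrix n n R}
    {v : n → R} (hv : A *ᵥ v = 0) (hv' : Aᵀ *ᵥ v = 0) (w : n → R) :
    (1 + vecMulVec v w)ᵀ * A * (1 + vecMulVec v w) = A := by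
  refine transpose_one_add_mul_mul_one_add ?_ ?_
  · rw [mul_vecMulVec, hv, zero_vecMulVec]
  · rw [transpose_vecMulVec, vecMulVec_mul, ← mulVec_transpose, hv', vecMulVec_zero]

theorem one_add_vecMulVec_mulVec_self [DecidableEq n] [CommRing R] {v w : n → R}
    (h : w ⬝ᵥ v = -1) : (1 + vecMulVec v w) *ᵥ v = 0 := by
  rw [add_mulVec, one_mulVec, vecMulVec_mulVec, h, op_smul_eq_smul, neg_one_smul, add_neg_cancel]

end

theorem stmt_3 {k : Type*} [Field k] (n : ℕ) (A : Matrix (Fin n) (Fin n) k)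
    (hGroup : ∀ X : Matrix (Fin n) (Fin n) k, Xᵀ * A * X = A → IsUnit X)
    (v : Fin n → k) (hv : A.mulVec v = 0) (hv' : Aᵀ.mulVec v = 0) :
    IsNilpotent (Matrix.vecMulVec v v) := by
  by_cases hiso : v ⬝ᵥ v = 0
  · exact isNilpotent_vecMulVec_self hiso
  have hw : (-(v ⬝ᵥ v)⁻¹ • v) ⬝ᵥ v = -1 := by
    rw [smul_dotProduct, smul_eq_mul, neg_mul, inv_mul_cancel₀ hiso]
  have hX := hGroup _ (transpose_one_add_vecMulVec_mul_mul hv hv' (-(v ⬝ᵥ v)⁻¹ • v))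
  have hv0 : v = 0 := mulVec_injective_iff_isUnit.2 hX <| by
    rw [one_add_vecMulVec_mulVec_self hw, mulVec_zero]
  exact absurd (by rw [hv0, zero_dotProduct]) hiso
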